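/- arXiv:1912.03331 — 2 statements merged into one kernel-verified Lean document; each statement's English description precedes it below -/
import Mathlib

section
/- Let m ≥ 3 be an integer. The normal form of a formal (TE)-structure over the germ at 0 of the F-manifold I₂(m) with its Euler field is unique: if α, α̃, λ, λ̃ ∈ ℂ (with λ = λ̃ = 0 when m is odd) are such that the normal forms NF(α, λ) and NF(α̃, λ̃) are formally gauge-equivalent, then α = α̃ and λ = λ̃. -/
noncomputable section

abbrev R2 : Type := MvPowerSeries (Fin 2) ℂ
abbrev RZ : Type := PowerSeries R2
abbrev Mat2 : Type := Matrix (Fin 2) (Fin 2) RZ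

def t1 : R2 := MvPowerSeries.X 0
def t2 : R2 := MvPowerSeries.X 1

/-- Formal partial derivative `∂/∂tᵢ` on `ℂ[[t₁,t₂]]`. -/
def pd (i : Fin 2) (f : R2) : R2 :=
  fun d => ((d i : ℂ) + 1) * MvPowerSeries.coeff (d + Finsupp.single i 1) f

/-- Formal partial derivative `∂/∂tᵢ` on `R[[z]]`, acting coefficientwise. -/
def pdZ (i : Fin 2) (f : RZ) : RZ :=
  PowerSeries.mk fun k => pd i (PowerSeries.coeff k f)

def pdM (i : Fin 2) (X : Mat2) : Mat2 := X.map (pdZ i)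

def dzM (X : Mat2) : Mat2 := X.map PowerSeries.derivativeFun

def coefM (k : ℕ) (X : Mat2) : Matrix (Fin 2) (Fin 2) R2 :=
  X.map (PowerSeries.coeff k)

def z : RZ := PowerSeries.X

def cR : R2 →+* RZ := PowerSeries.C

def cC (a : ℂ) : RZ := cR (MvPowerSeries.C a)

def C1 : Matrix (Fin 2) (Fin 2) R2 := 1
def C2 (m : ℕ) : Matrix (Fin 2) (Fin 2) R2 := !![0, t2 ^ (m - 2); 1, 0]
def Dm : Matrix (Fin 2) (Fin 2) R2 := !![1, 0; 0, -1]
def Em : Matrix (Fin 2) (Fin 2) R2 := !![0, 1; 0, 0]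

def mR (X : Matrix (Fin 2) (Fin 2) R2) : Mat2 := X.map cR

structure IsT (m : ℕ) (A₁ A₂ : Mat2) : Prop where
  flat : z • pdM 0 A₂ - z • pdM 1 A₁ + (A₁ * A₂ - A₂ * A₁) = 0
  init1 : coefM 0 A₁ = C1
  init2 : coefM 0 A₂ * coefM 0 A₂ = t2 ^ (m - 2) • C1
  nonzero : (coefM 0 A₂).map (MvPowerSeries.constantCoeff) ≠ 0

def GaugeT (A₁ A₂ A₁' A₂' : Mat2) : Prop :=
  ∃ T : Mat2, IsUnit T ∧
    z • pdM 0 T + A₁ * T - T * A₁' = 0 ∧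
    z • pdM 1 T + A₂ * T - T * A₂' = 0

def PolyT2 (m : ℕ) (f : RZ) : Prop :=
  ∀ (k : ℕ) (d : Fin 2 →₀ ℕ),
    MvPowerSeries.coeff d (PowerSeries.coeff k f) ≠ 0 → d 0 = 0 ∧ d 1 + 4 ≤ m

def NA₂ (m : ℕ) (f : RZ) : Mat2 := mR (C2 m) + (z * f) • mR Em

/-- A formal (TE)-structure over the germ at 0 of the F-manifold `I₂(m)` with its Euler
field `E = t₁∂₁ + (2/m)t₂∂₂`. -/
structure IsTE (m : ℕ) (A₁ A₂ B : Mat2) : Prop where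
  isT : IsT m A₁ A₂
  flatB1 : z • pdM 0 B - (z * z) • dzM A₁ + z • A₁ + (A₁ * B - B * A₁) = 0
  flatB2 : z • pdM 1 B - (z * z) • dzM A₂ + z • A₂ + (A₂ * B - B * A₂) = 0
  initB : coefM 0 B = -(t1 • C1) - (((2 : ℂ) / (m : ℂ)) • t2) • coefM 0 A₂

/-- Formal gauge equivalence of (TE)-structures. -/
def GaugeTE (A₁ A₂ B A₁' A₂' B' : Mat2) : Prop :=
  ∃ T : Mat2, IsUnit T ∧
    z • pdM 0 T + A₁ * T - T * A₁' = 0 ∧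
    z • pdM 1 T + A₂ * T - T * A₂' = 0 ∧
    (z * z) • dzM T + B * T - T * B' = 0

open scoped Classical in
/-- The series `f` of the normal form: `0` if `m` is odd, `λ·t₂^{(m−4)/2}` if `m` is even. -/
def fNF (m : ℕ) (lam : ℂ) : RZ :=
  if Even m then cR (lam • t2 ^ ((m - 4) / 2)) else 0

/-- The matrix `B` of the normal form `NF(α, λ)`. -/
def NFB (m : ℕ) (α lam : ℂ) : Mat2 :=
  (-(cR t1)) • mR C1 - (cC ((2 : ℂ) / (m : ℂ)) * cR t2) • mR (C2 m)
    + z • (cC α • mR C1 + cC (((2 : ℂ) - (m : ℂ)) / (2 * (m : ℂ))) • mR Dm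
        - (cC ((2 : ℂ) / (m : ℂ)) * cR t2 * fNF m lam) • mR Em)


abbrev MvC : ℂ →+* R2 := MvPowerSeries.C

lemma DH_coeff_one_mul (a b : RZ) :
    PowerSeries.coeff 1 (a * b) =
      PowerSeries.constantCoeff a * PowerSeries.coeff 1 b +
        PowerSeries.coeff 1 a * PowerSeries.constantCoeff b := by
  rw [PowerSeries.coeff_mul, Finset.Nat.sum_antidiagonal_eq_sum_range_succ_mk]
  simp [Finset.sum_range_succ]

lemma DH_coeff_one_C_pow (x : R2) (n : ℕ) :
    PowerSeries.coeff 1 ((PowerSeries.C x) ^ n) = 0 := by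
  rw [← map_pow, PowerSeries.coeff_C]
  simp

lemma DH_coeff_pd (i : Fin 2) (x : R2) (d : Fin 2 →₀ ℕ) :
    MvPowerSeries.coeff d (pd i x) =
      ((d i : ℂ) + 1) * MvPowerSeries.coeff (d + Finsupp.single i 1) x := rfl

lemma DH_pd_zero (i : Fin 2) : pd i (0 : R2) = 0 := by
  funext d; simp [pd]; rfl

lemma DH_coeff_t2_pd1 (x : R2) (d : Fin 2 →₀ ℕ) :
    MvPowerSeries.coeff d (t2 * pd 1 x) = (d 1 : ℂ) * MvPowerSeries.coeff d x := by
  classical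
  have hX : (t2 : R2) = MvPowerSeries.monomial (Finsupp.single 1 1) 1 := rfl
  rw [hX, MvPowerSeries.coeff_monomial_mul]
  split_ifs with h
  · rw [one_mul, DH_coeff_pd]
    have h1 : 1 ≤ d 1 := by
      have := Finsupp.single_le_iff.mp h; simpa using this
    have hadd : d - Finsupp.single 1 1 + Finsupp.single 1 1 = d :=
      tsub_add_cancel_of_le h
    rw [hadd, Finsupp.tsub_apply]
    simp only [Finsupp.single_eq_same]
    congr 1
    push_cast [h1]
    ring
  · have h1 : d 1 = 0 := by
      by_contra hc
      exact h (Finsupp.single_le_iff.mpr (by omega))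
    rw [h1]; simp

lemma DH_r0_zero (m : ℕ) (hm : 3 ≤ m) (x : R2)
    (h : MvC ((2 : ℂ) / m) * (t2 * pd 1 x) = MvC (((2 : ℂ) - m) / m) * x) : x = 0 := by
  have hm0 : (m : ℂ) ≠ 0 := by
    exact_mod_cast Nat.cast_ne_zero.mpr (by omega)
  ext d
  have hd := congrArg (MvPowerSeries.coeff d) h
  rw [MvPowerSeries.coeff_C_mul, MvPowerSeries.coeff_C_mul, DH_coeff_t2_pd1] at hd
  have key : (2 * (d 1 : ℂ) - (2 - m)) * MvPowerSeries.coeff d x = 0 := by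
    field_simp at hd
    linear_combination hd
  have hne : (2 * (d 1 : ℂ) - (2 - m)) ≠ 0 := by
    have hcast : (2 * (d 1 : ℂ) - (2 - m)) = ((2 * d 1 + (m - 2) : ℕ) : ℂ) := by
      have h2 : (2 : ℕ) ≤ m := by omega
      push_cast [h2]; ring
    rw [hcast]
    have hne2 : 2 * d 1 + (m - 2) ≠ 0 := by omega
    exact_mod_cast Nat.cast_ne_zero.mpr hne2
  have := mul_eq_zero.mp key
  simpa [hne] using this

open PowerSeries in
lemma DH_ex2 (m : ℕ) (T : Mat2) (gl gl' : R2)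
    (hg2 : z • pdM 1 T + NA₂ m (cR gl) * T - T * NA₂ m (cR gl') = 0) :
    (t2 ^ (m - 2) * constantCoeff (T 1 0) - constantCoeff (T 0 1) = 0)
    ∧ (constantCoeff (T 0 0) - constantCoeff (T 1 1) = 0)
    ∧ (pd 1 (constantCoeff (T 0 0)) + t2 ^ (m - 2) * coeff 1 (T 1 0)
        + gl * constantCoeff (T 1 0) - coeff 1 (T 0 1) = 0)
    ∧ (pd 1 (constantCoeff (T 1 0)) + coeff 1 (T 0 0) - coeff 1 (T 1 1) = 0) := by
  refine ⟨?_, ?_, ?_, ?_⟩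
  · have h := congrArg (PowerSeries.constantCoeff (R := R2)) (congrFun (congrFun hg2 0) 0)
    simp [NA₂, mR, C2, Em, cR, z, pdM, pdZ, Matrix.mul_apply, Fin.sum_univ_two,
      Matrix.add_apply, Matrix.sub_apply, Matrix.smul_apply, Matrix.map_apply,
      smul_eq_mul] at h
    linear_combination h
  · have h := congrArg (PowerSeries.constantCoeff (R := R2)) (congrFun (congrFun hg2 1) 0)
    simp [NA₂, mR, C2, Em, cR, z, pdM, pdZ, Matrix.mul_apply, Fin.sum_univ_two,
      Matrix.add_apply, Matrix.sub_apply, Matrix.smul_apply, Matrix.map_apply,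
      smul_eq_mul] at h
    linear_combination h
  · have h := congrArg (PowerSeries.coeff 1) (congrFun (congrFun hg2 0) 0)
    simp [NA₂, mR, C2, Em, cR, z, pdM, pdZ, Matrix.mul_apply, Fin.sum_univ_two,
      Matrix.add_apply, Matrix.sub_apply, Matrix.smul_apply, Matrix.map_apply,
      smul_eq_mul, DH_coeff_one_mul, DH_coeff_one_C_pow, PowerSeries.coeff_X,
      PowerSeries.coeff_C] at h
    linear_combination h
  · have h := congrArg (PowerSeries.coeff 1) (congrFun (congrFun hg2 1) 0)
    simp [NA₂, mR, C2, Em, cR, z, pdM, pdZ, Matrix.mul_apply, Fin.sum_univ_two,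
      Matrix.add_apply, Matrix.sub_apply, Matrix.smul_apply, Matrix.map_apply,
      smul_eq_mul, DH_coeff_one_mul, DH_coeff_one_C_pow, PowerSeries.coeff_X,
      PowerSeries.coeff_C] at h
    linear_combination h
set_option maxHeartbeats 1000000 in
open PowerSeries in
lemma DH_ex3 (m : ℕ) (T : Mat2) (α α' lam lam' : ℂ) (gl gl' : R2)
    (hfl : fNF m lam = cR gl) (hfl' : fNF m lam' = cR gl')
    (hg3 : (z * z) • dzM T + NFB m α lam * T - T * NFB m α' lam' = 0) :
    ((MvC α - MvC α') * constantCoeff (T 0 0)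
      - MvC ((2 : ℂ) / m) * t2 * (t2 ^ (m - 2) * coeff 1 (T 1 0))
      - MvC ((2 : ℂ) / m) * t2 * (gl * constantCoeff (T 1 0))
      + MvC ((2 : ℂ) / m) * t2 * coeff 1 (T 0 1) = 0)
    ∧ (MvC ((2 : ℂ) / m) * t2 * (coeff 1 (T 1 1) - coeff 1 (T 0 0))
      + (MvC α - MvC α' - 2 * MvC (((2 : ℂ) - (m : ℂ)) / (2 * (m : ℂ))))
        * constantCoeff (T 1 0) = 0)
    ∧ ((MvC α - MvC α' + 2 * MvC (((2 : ℂ) - (m : ℂ)) / (2 * (m : ℂ))))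
        * constantCoeff (T 0 1)
      + MvC ((2 : ℂ) / m) * t2 * (t2 ^ (m - 2) * (coeff 1 (T 0 0) - coeff 1 (T 1 1)))
      + MvC ((2 : ℂ) / m) * t2 * (gl' * constantCoeff (T 0 0)
          - gl * constantCoeff (T 1 1)) = 0) := by
  refine ⟨?_, ?_, ?_⟩
  · have h := congrArg (PowerSeries.coeff 1) (congrFun (congrFun hg3 0) 0)
    simp [NFB, hfl, hfl', mR, C2, Em, Dm, C1, cC, cR, z, dzM, Matrix.one_fin_two,
      Matrix.mul_apply, Fin.sum_univ_two, Matrix.add_apply, Matrix.sub_apply,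
      Matrix.smul_apply, Matrix.neg_apply, Matrix.map_apply, smul_eq_mul,
      DH_coeff_one_mul, DH_coeff_one_C_pow, PowerSeries.coeff_X, PowerSeries.coeff_C] at h
    linear_combination h
  · have h := congrArg (PowerSeries.coeff 1) (congrFun (congrFun hg3 1) 0)
    simp [NFB, hfl, hfl', mR, C2, Em, Dm, C1, cC, cR, z, dzM, Matrix.one_fin_two,
      Matrix.mul_apply, Fin.sum_univ_two, Matrix.add_apply, Matrix.sub_apply,
      Matrix.smul_apply, Matrix.neg_apply, Matrix.map_apply, smul_eq_mul,
      DH_coeff_one_mul, DH_coeff_one_C_pow, PowerSeries.coeff_X, PowerSeries.coeff_C] at h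
    linear_combination h
  · have h := congrArg (PowerSeries.coeff 1) (congrFun (congrFun hg3 0) 1)
    simp [NFB, hfl, hfl', mR, C2, Em, Dm, C1, cC, cR, z, dzM, Matrix.one_fin_two,
      Matrix.mul_apply, Fin.sum_univ_two, Matrix.add_apply, Matrix.sub_apply,
      Matrix.smul_apply, Matrix.neg_apply, Matrix.map_apply, smul_eq_mul,
      DH_coeff_one_mul, DH_coeff_one_C_pow, PowerSeries.coeff_X, PowerSeries.coeff_C] at h
    linear_combination h

/-- **Theorem 8.5 of David–Hertling (uniqueness part).** The normal form `NF(α, λ)` of a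
formal (TE)-structure over the germ at 0 of the F-manifold `I₂(m)` with its Euler field is
unique: if `NF(α, λ)` and `NF(α̃, λ̃)` are formally gauge-equivalent (with `λ = λ̃ = 0` when
`m` is odd), then `α = α̃` and `λ = λ̃`. -/
theorem formal_TE_structure_normal_form_unique (m : ℕ) (hm : 3 ≤ m)
    (α α' lam lam' : ℂ) (h0 : Odd m → lam = 0 ∧ lam' = 0)
    (h : GaugeTE (mR C1) (NA₂ m (fNF m lam)) (NFB m α lam)
                 (mR C1) (NA₂ m (fNF m lam')) (NFB m α' lam')) :
    α = α' ∧ lam = lam' := by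
  classical
  obtain ⟨T, hT, -, hg2, hg3⟩ := h
  have hm0 : (m : ℂ) ≠ 0 := by
    exact_mod_cast Nat.cast_ne_zero.mpr (by omega)
  set gl : R2 := (if Even m then lam • t2 ^ ((m - 4) / 2) else 0) with hgl
  set gl' : R2 := (if Even m then lam' • t2 ^ ((m - 4) / 2) else 0) with hgl'
  have hfl : fNF m lam = cR gl := by
    by_cases he : Even m <;> simp [fNF, he, hgl]
  have hfl' : fNF m lam' = cR gl' := by
    by_cases he : Even m <;> simp [fNF, he, hgl']
  rw [hfl, hfl'] at hg2
  obtain ⟨h2a, h2b, h2c, h2d⟩ := DH_ex2 m T gl gl' hg2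
  obtain ⟨h3a, h3b, h3c⟩ := DH_ex3 m T α α' lam lam' gl gl' hfl hfl' hg3
  -- the constant term of T₀₀ is invertible
  have hdetU : IsUnit (PowerSeries.constantCoeff (T 0 0)
      * PowerSeries.constantCoeff (T 1 1)
      - PowerSeries.constantCoeff (T 0 1) * PowerSeries.constantCoeff (T 1 0)) := by
    have h1 : IsUnit ((PowerSeries.constantCoeff (R := R2)).mapMatrix T) := hT.map _
    have h2 := (Matrix.isUnit_iff_isUnit_det _).mp h1
    rwa [RingHom.mapMatrix_apply, Matrix.det_fin_two, Matrix.map_apply, Matrix.map_apply,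
      Matrix.map_apply, Matrix.map_apply] at h2
  have hcP : MvPowerSeries.constantCoeff
      (PowerSeries.constantCoeff (T 0 0)) ≠ 0 := by
    have h3 := hdetU.map (MvPowerSeries.constantCoeff)
    have hq : PowerSeries.constantCoeff (T 0 1)
        = t2 ^ (m - 2) * PowerSeries.constantCoeff (T 1 0) := by linear_combination -h2a
    have hs : PowerSeries.constantCoeff (T 1 1)
        = PowerSeries.constantCoeff (T 0 0) := by linear_combination -h2b
    rw [hq, hs] at h3
    have hm2 : m - 2 ≠ 0 := by omega
    simp [map_mul, map_sub, map_pow, t2, MvPowerSeries.constantCoeff_X, zero_pow hm2] at h3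
    intro hz
    rw [hz] at h3
    simp at h3
  -- α = α'
  have hA : (MvC α - MvC α') * PowerSeries.constantCoeff (T 0 0)
      + MvC ((2 : ℂ) / m) * (t2 * pd 1 (PowerSeries.constantCoeff (T 0 0))) = 0 := by
    linear_combination h3a + (MvC ((2 : ℂ) / m) * t2) * h2c
  have hαα : α = α' := by
    have h4 := congrArg (MvPowerSeries.constantCoeff) hA
    simp [map_mul, map_sub, map_add, t2, MvPowerSeries.constantCoeff_X] at h4
    rcases h4 with h4 | h4
    · exact sub_eq_zero.mp (by linear_combination h4)
    · exact absurd h4 hcP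
  subst hαα
  -- the constant z-term of T₁₀ vanishes
  have hkey : MvC ((2 : ℂ) / m) * (t2 * pd 1 (PowerSeries.constantCoeff (T 1 0)))
      = MvC (((2 : ℂ) - m) / m) * PowerSeries.constantCoeff (T 1 0) := by
    have e2 : MvC (((2 : ℂ) - m) / m) = 2 * MvC (((2 : ℂ) - (m : ℂ)) / (2 * (m : ℂ))) := by
      rw [← map_ofNat MvC 2, ← map_mul]
      congr 1
      field_simp
    rw [e2]
    linear_combination h3b + (MvC ((2 : ℂ) / m) * t2) * h2d
  have hr0 : PowerSeries.constantCoeff (T 1 0) = 0 := DH_r0_zero m hm _ hkey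
  have hq0 : PowerSeries.constantCoeff (T 0 1) = 0 := by
    linear_combination -h2a + t2 ^ (m - 2) * hr0
  have hps : PowerSeries.constantCoeff (T 1 1)
      = PowerSeries.constantCoeff (T 0 0) := by linear_combination -h2b
  have hpd1 : pd 1 (PowerSeries.constantCoeff (T 1 0)) = 0 := by
    rw [hr0]; exact DH_pd_zero 1
  -- λ = λ'
  have hfin : MvC ((2 : ℂ) / m)
      * (t2 * ((gl' - gl) * PowerSeries.constantCoeff (T 0 0))) = 0 := by
    linear_combination h3c
      - 2 * MvC (((2 : ℂ) - (m : ℂ)) / (2 * (m : ℂ))) * hq0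
      + MvC ((2 : ℂ) / m) * t2 * gl * hps
      - MvC ((2 : ℂ) / m) * t2 * t2 ^ (m - 2) * h2d
      + MvC ((2 : ℂ) / m) * t2 * t2 ^ (m - 2) * hpd1
  have hMvne : MvC ((2 : ℂ) / m) ≠ 0 := by
    intro hc
    have hc2 := congrArg (MvPowerSeries.constantCoeff) hc
    simp at hc2
    omega
  have ht2ne : (t2 : R2) ≠ 0 := by
    intro hc
    have hc2 := congrArg (MvPowerSeries.coeff (Finsupp.single 1 1)) hc
    rw [show (t2 : R2) = MvPowerSeries.monomial (Finsupp.single 1 1) 1 from rfl,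
      MvPowerSeries.coeff_monomial_same] at hc2
    simpa using hc2
  have hp0ne : PowerSeries.constantCoeff (T 0 0) ≠ 0 := by
    intro hc
    exact hcP (by rw [hc]; simp)
  have hgg : gl' = gl := by
    rcases mul_eq_zero.mp hfin with hc | hc
    · exact absurd hc hMvne
    rcases mul_eq_zero.mp hc with hc' | hc'
    · exact absurd hc' ht2ne
    rcases mul_eq_zero.mp hc' with hc'' | hc''
    · exact sub_eq_zero.mp hc''
    · exact absurd hc'' hp0ne
  refine ⟨rfl, ?_⟩
  rcases Nat.even_or_odd m with he | ho
  · have hgl2 : gl = lam • t2 ^ ((m - 4) / 2) := by rw [hgl, if_pos he]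
    have hgl2' : gl' = lam' • t2 ^ ((m - 4) / 2) := by rw [hgl', if_pos he]
    rw [hgl2, hgl2'] at hgg
    have h5 := congrArg (MvPowerSeries.coeff (Finsupp.single 1 ((m - 4) / 2))) hgg
    rw [MvPowerSeries.coeff_smul, MvPowerSeries.coeff_smul,
      show (t2 : R2) ^ ((m - 4) / 2) = MvPowerSeries.X 1 ^ ((m - 4) / 2) from rfl,
      MvPowerSeries.coeff_X_pow] at h5
    simpa using h5.symm
  · obtain ⟨hl, hl'⟩ := h0 ho
    rw [hl, hl']

end
end

section
/- Let n ≥ 1 and let U ⊆ ℂⁿ be a connected open set. Define the multiplication of holomorphic vector fields X, Y : U → ℂⁿ pointwise coordinatewise: (X ∘ Y)_k = X_k·Y_k for k = 1,…,n. Then a holomorphic map E : U → ℂⁿ satisfies the Euler field equation [E, X∘Y] − [E, X]∘Y − X∘[E, Y] = X∘Y for all holomorphic vector fields X, Y : U → ℂⁿ if and only if there exist c₁,…,cₙ ∈ ℂ such that E(u₁,…,uₙ) = (u₁ + c₁, …, uₙ + cₙ) for all u ∈ U. -/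
/-!
Writing `A = DE(p)`, all derivatives of `X` and `Y` cancel from the Euler equation at `p`, which
becomes the algebraic identity `A x · y + x · A y − A (x · y) = x · y` for `x = X(p)`, `y = Y(p)`.
Thus `E` is an Euler field iff `DE(p) − id` is a derivation of the algebra `ℂⁿ` at every
`p ∈ U`. A derivation kills every idempotent `e` (`D e = 2 e D e` forces `e D e = 0`), and the
idempotents `e_k` span `ℂⁿ`, so `DE = id` on `U`; on a connected open set this means
`E = id + c`.
-/

noncomputable section

/-- The Lie bracket `[X, Y](p) = (DY)(p)(X(p)) − (DX)(p)(Y(p))` of (holomorphic) vector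
fields on (an open subset of) `ℂⁿ`. -/
def lieBracket {n : ℕ} (X Y : (Fin n → ℂ) → (Fin n → ℂ)) : (Fin n → ℂ) → (Fin n → ℂ) :=
  fun p => fderiv ℂ Y p (X p) - fderiv ℂ X p (Y p)

/-- The coordinatewise multiplication of the semisimple F-manifold `A₁ⁿ` in canonical
coordinates: `(X ∘ Y)_k = X_k·Y_k`. -/
def mulSS {n : ℕ} (X Y : (Fin n → ℂ) → (Fin n → ℂ)) : (Fin n → ℂ) → (Fin n → ℂ) :=
  fun p k => X p k * Y p k

theorem Derivation.map_eq_zero_of_isIdempotentElem {R A M : Type*} [CommSemiring R]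
    [CommSemiring A] [Algebra R A] [AddCancelCommMonoid M] [Module A M] [Module R M]
    (D : Derivation R A M) {e : A} (he : IsIdempotentElem e) : D e = 0 := by
  have hD : D e = e • D e + e • D e := by
    conv_lhs => rw [← he.eq]
    rw [D.leibniz]
  have h : e • D e = 0 := by
    have := congrArg (e • ·) hD
    simpa only [smul_add, smul_smul, he.eq, left_eq_add] using this
  rw [hD, h, add_zero]

theorem Derivation.eq_zero_of_pi {R ι : Type*} [CommRing R] [Finite ι]
    (D : Derivation R (ι → R) (ι → R)) : D = 0 := by
  classical
  have h : (D : (ι → R) →ₗ[R] (ι → R)) = 0 := by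
    refine LinearMap.pi_ext fun i x => ?_
    have hsingle : Pi.single i x = x • (Pi.single i 1 : ι → R) := by simp [← Pi.single_smul]
    have hidem : IsIdempotentElem (Pi.single i 1 : ι → R) := by
      simp [IsIdempotentElem, ← Pi.single_mul]
    simp [hsingle, D.map_eq_zero_of_isIdempotentElem hidem]
  exact Derivation.ext fun a => by simpa using LinearMap.congr_fun h a

theorem LinearMap.eq_id_of_map_mul {R ι : Type*} [CommRing R] [Finite ι]
    (L : (ι → R) →ₗ[R] (ι → R)) (hL : ∀ x y, L x * y + x * L y - L (x * y) = x * y) :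
    L = LinearMap.id := by
  let D : Derivation R (ι → R) (ι → R) := Derivation.mk' (L - LinearMap.id) fun x y => by
    simp only [LinearMap.sub_apply, LinearMap.id_apply, smul_eq_mul]
    linear_combination (hL x y).symm
  have h := congrArg (fun D : Derivation R (ι → R) (ι → R) => (D : (ι → R) →ₗ[R] (ι → R)))
    D.eq_zero_of_pi
  simpa [D, sub_eq_zero] using h

section

variable {n : ℕ} {E X Y : (Fin n → ℂ) → (Fin n → ℂ)} {p : Fin n → ℂ}

theorem mulSS_eq_mul (X Y : (Fin n → ℂ) → (Fin n → ℂ)) : mulSS X Y = X * Y := rfl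

theorem lieBracket_mulSS_sub_mulSS_lieBracket (hX : DifferentiableAt ℂ X p)
    (hY : DifferentiableAt ℂ Y p) :
    lieBracket E (mulSS X Y) p - mulSS (lieBracket E X) Y p - mulSS X (lieBracket E Y) p =
      fderiv ℂ E p (X p) * Y p + X p * fderiv ℂ E p (Y p) - fderiv ℂ E p (X p * Y p) := by
  simp only [lieBracket, mulSS_eq_mul, Pi.mul_apply, fderiv_mul hX hY,
    FunLike.coe_add, FunLike.coe_smul, Pi.add_apply, Pi.smul_apply,
    smul_eq_mul]
  ring

end

theorem euler_fields_on_semisimple_general (n : ℕ)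
    (U : Set (Fin n → ℂ)) (hU : IsOpen U) (hUc : IsConnected U)
    (E : (Fin n → ℂ) → (Fin n → ℂ)) (hE : DifferentiableOn ℂ E U) :
    (∀ X Y : (Fin n → ℂ) → (Fin n → ℂ),
        DifferentiableOn ℂ X U → DifferentiableOn ℂ Y U →
        ∀ p ∈ U,
          lieBracket E (mulSS X Y) p - mulSS (lieBracket E X) Y p
            - mulSS X (lieBracket E Y) p = mulSS X Y p) ↔
      ∃ c : Fin n → ℂ, ∀ p ∈ U, E p = fun k => p k + c k := by
  constructor
  · intro hEuler
    have hDE : ∀ p ∈ U, fderiv ℂ E p = ContinuousLinearMap.id ℂ (Fin n → ℂ) := by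
      intro p hp
      refine ContinuousLinearMap.coe_injective (LinearMap.eq_id_of_map_mul _ fun x y => ?_)
      have h := hEuler (fun _ => x) (fun _ => y) (differentiableOn_const x)
        (differentiableOn_const y) p hp
      rwa [lieBracket_mulSS_sub_mulSS_lieBracket (differentiableAt_const x)
        (differentiableAt_const y)] at h
    obtain ⟨c, hc⟩ := hU.exists_eq_add_of_fderiv_eq hUc.isPreconnected hE differentiableOn_id
      fun p hp => by rw [hDE p hp, fderiv_id]
    exact ⟨c, fun p hp => hc hp⟩
  · rintro ⟨c, hc⟩ X Y hX hY p hp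
    have hEc : E =ᶠ[nhds p] fun q => q + c := by
      filter_upwards [hU.mem_nhds hp] with q hq using hc q hq
    have hDE : fderiv ℂ E p = ContinuousLinearMap.id ℂ (Fin n → ℂ) :=
      ((hasFDerivAt_id p).add_const c).congr_of_eventuallyEq hEc |>.fderiv
    rw [lieBracket_mulSS_sub_mulSS_lieBracket (hX.differentiableAt (hU.mem_nhds hp))
      (hY.differentiableAt (hU.mem_nhds hp)), hDE]
    simp only [ContinuousLinearMap.id_apply, mulSS_eq_mul, Pi.mul_apply]
    ring

/-- **Remark 2.7(i) of David–Hertling.** On a semisimple F-manifold in canonical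
coordinates (coordinatewise multiplication on a connected open `U ⊆ ℂⁿ`), a holomorphic
vector field `E` satisfies the Euler field equation `Lie_E(∘) = ∘`, i.e.
`[E, X∘Y] − [E,X]∘Y − X∘[E,Y] = X∘Y` for all holomorphic vector fields `X, Y`, if and
only if `E = Σ_k (u_k + c_k) e_k` for some constants `c₁,…,cₙ ∈ ℂ`. -/
theorem euler_fields_on_semisimple (n : ℕ) (hn : 1 ≤ n)
    (U : Set (Fin n → ℂ)) (hU : IsOpen U) (hUc : IsConnected U)
    (E : (Fin n → ℂ) → (Fin n → ℂ)) (hE : DifferentiableOn ℂ E U) :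
    (∀ X Y : (Fin n → ℂ) → (Fin n → ℂ),
        DifferentiableOn ℂ X U → DifferentiableOn ℂ Y U →
        ∀ p ∈ U,
          lieBracket E (mulSS X Y) p - mulSS (lieBracket E X) Y p
            - mulSS X (lieBracket E Y) p = mulSS X Y p) ↔
      ∃ c : Fin n → ℂ, ∀ p ∈ U, E p = fun k => p k + c k :=
  euler_fields_on_semisimple_general n U hU hUc E hE
end
end
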